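/- Let Γ ⊂ ℝ^{2d} with δ-neighborhoods Γ_δ defined via the Japanese bracket, and suppose z ∉ Γ_δ while w ∈ χ(Γ)_{δ'}, where χ is bi-Lipschitz measure-preserving and δ' < δ* < δ are chosen so that (χ(Γ)_{δ'})_{δ'} ⊂ χ(Γ)_{δ*} ⊂ χ(Γ_δ). Then |w − χ(z)| ≳ max{⟨z⟩, ⟨w⟩}, i.e. there is c > 0 (independent of w, z, Γ) with |w − χ(z)| ≥ c⟨z⟩ and |w − χ(z)| ≥ c⟨w⟩. -/
import Mathlib


open Real MeasureTheory

/-- Japanese bracket. -/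
noncomputable def jb {n : ℕ} (z : EuclideanSpace ℝ (Fin n)) : ℝ :=
  Real.sqrt (1 + ‖z‖ ^ 2)

/-- The `δ`-neighborhood of a set `Γ ⊆ ℝ^n`. -/
def nbhd {n : ℕ} (Γ : Set (EuclideanSpace ℝ (Fin n))) (δ : ℝ) :
    Set (EuclideanSpace ℝ (Fin n)) :=
  {z | ∃ z₀ ∈ Γ, ‖z - z₀‖ < δ * jb z₀}

lemma jb_ge_one {n : ℕ} (z : EuclideanSpace ℝ (Fin n)) : 1 ≤ jb z := by
  rw [show (1:ℝ) = Real.sqrt 1 by rw [Real.sqrt_one]]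
  exact Real.sqrt_le_sqrt (by nlinarith [sq_nonneg ‖z‖])

lemma jb_nonneg {n : ℕ} (z : EuclideanSpace ℝ (Fin n)) : 0 ≤ jb z :=
  le_trans zero_le_one (jb_ge_one z)

lemma norm_le_jb {n : ℕ} (z : EuclideanSpace ℝ (Fin n)) : ‖z‖ ≤ jb z := by
  rw [show ‖z‖ = Real.sqrt (‖z‖ ^ 2) from (Real.sqrt_sq (norm_nonneg z)).symm]
  exact Real.sqrt_le_sqrt (by nlinarith)

lemma jb_le {n : ℕ} (z : EuclideanSpace ℝ (Fin n)) : jb z ≤ 1 + ‖z‖ := by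
  rw [show 1 + ‖z‖ = Real.sqrt ((1 + ‖z‖) ^ 2) from
    (Real.sqrt_sq (by positivity)).symm]
  exact Real.sqrt_le_sqrt (by nlinarith [norm_nonneg z])

theorem separation_estimate (d : ℕ)
    (χ ψ : EuclideanSpace ℝ (Fin (2 * d)) → EuclideanSpace ℝ (Fin (2 * d)))
    (K K' : NNReal) (hχ : LipschitzWith K χ) (hψ : LipschitzWith K' ψ)
    (hl : Function.LeftInverse ψ χ) (hr : Function.RightInverse ψ χ)
    (hmp : MeasurePreserving χ volume volume)
    (δ δs δ' : ℝ) (h0 : 0 < δ') (h1 : δ' < δs) (h2 : δs < δ) (h3 : δ < 1) :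
    ∃ c > 0, ∀ Γ : Set (EuclideanSpace ℝ (Fin (2 * d))),
      nbhd (nbhd (χ '' Γ) δ') δ' ⊆ nbhd (χ '' Γ) δs →
      nbhd (χ '' Γ) δs ⊆ χ '' nbhd Γ δ →
      ∀ z w, z ∉ nbhd Γ δ → w ∈ nbhd (χ '' Γ) δ' →
        c * jb z ≤ ‖w - χ z‖ ∧ c * jb w ≤ ‖w - χ z‖ := by
  set C : ℝ := (1 + ‖ψ 0‖) / δ' + (K' : ℝ) + (K' : ℝ) / δ' with hCdef
  have hC : 0 < C := by positivity
  refine ⟨min δ' (1 / C), lt_min h0 (by positivity), ?_⟩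
  intro Γ hsub1 hsub2 z w hz hw
  set r : ℝ := ‖w - χ z‖ with hrdef
  -- key separation: δ' * jb w ≤ r
  have hkey : δ' * jb w ≤ r := by
    by_contra hcon
    push_neg at hcon
    have hmem : χ z ∈ nbhd (nbhd (χ '' Γ) δ') δ' := by
      refine ⟨w, hw, ?_⟩
      rwa [norm_sub_rev]
    obtain ⟨z₁, hz₁, he⟩ := hsub2 (hsub1 hmem)
    have hzz : z₁ = z := by
      have := congrArg ψ he
      rwa [hl, hl] at this
    exact hz (hzz ▸ hz₁)
  have hw1 : (1:ℝ) ≤ jb w := jb_ge_one w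
  have hrδ : δ' ≤ r := le_trans (by nlinarith) hkey
  have hjwr : jb w ≤ r / δ' := by
    rw [le_div_iff₀ h0]; nlinarith
  have hwr : ‖w‖ ≤ r / δ' := le_trans (norm_le_jb w) hjwr
  have h1ψ : ‖ψ (χ z) - ψ w‖ ≤ (K' : ℝ) * r := by
    have := hψ.dist_le_mul (χ z) w
    rwa [dist_eq_norm, dist_eq_norm, norm_sub_rev (χ z) w] at this
  have h2ψ : ‖ψ w - ψ 0‖ ≤ (K' : ℝ) * ‖w‖ := by
    have := hψ.dist_le_mul w 0
    rwa [dist_eq_norm, dist_eq_norm, sub_zero] at this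
  have hznorm : ‖z‖ ≤ (K' : ℝ) * r + (K' : ℝ) * ‖w‖ + ‖ψ 0‖ := by
    calc ‖z‖ = ‖ψ (χ z)‖ := by rw [hl]
    _ = ‖(ψ (χ z) - ψ w) + (ψ w - ψ 0) + ψ 0‖ := by
        rw [sub_add_sub_cancel, sub_add_cancel]
    _ ≤ ‖ψ (χ z) - ψ w‖ + ‖ψ w - ψ 0‖ + ‖ψ 0‖ :=
        le_trans (norm_add_le _ _) (by gcongr; exact norm_add_le _ _)
    _ ≤ (K' : ℝ) * r + (K' : ℝ) * ‖w‖ + ‖ψ 0‖ := by gcongr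
  have hone : 1 + ‖ψ 0‖ ≤ (1 + ‖ψ 0‖) / δ' * r := by
    rw [div_mul_eq_mul_div, le_div_iff₀ h0]
    nlinarith [norm_nonneg (ψ 0)]
  have hK' : (0:ℝ) ≤ (K' : ℝ) := K'.coe_nonneg
  have hKw : (K' : ℝ) * ‖w‖ ≤ (K' : ℝ) * (r / δ') := by gcongr
  have heq : C * r = (1 + ‖ψ 0‖) / δ' * r + (K' : ℝ) * r + (K' : ℝ) * (r / δ') := by
    rw [hCdef]; ring
  have hjz : jb z ≤ C * r := by
    rw [heq]
    have := jb_le z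
    linarith
  constructor
  · have step1 : min δ' (1 / C) * jb z ≤ 1 / C * jb z :=
      mul_le_mul_of_nonneg_right (min_le_right _ _) (jb_nonneg z)
    have step2 : 1 / C * jb z ≤ 1 / C * (C * r) :=
      mul_le_mul_of_nonneg_left hjz (by positivity)
    have : 1 / C * (C * r) = r := by field_simp
    linarith
  · have step1 : min δ' (1 / C) * jb w ≤ δ' * jb w :=
      mul_le_mul_of_nonneg_right (min_le_left _ _) (jb_nonneg w)
    linarith
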